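/- arXiv:2309.09154 — 2 statements merged into one kernel-verified Lean document; each statement's English description precedes it below -/
import Mathlib

section
/- Let f be a piecewise contracting interval map on X satisfying the separation property and D ⊂ X̃. Then the topological entropy of f restricted to Λ ∩ X̃, defined by Bowen's formula h_top(f|(Λ∩X̃)) = lim_{ε→0} limsup_{n→∞} (log r_n(ε, Λ∩X̃))/n, where r_n(ε, Λ∩X̃) is the smallest cardinality of an (n,ε)-spanning set for Λ ∩ X̃ with respect to f, is equal to zero. -/
open Set Filter Metric Topology

/-- A piecewise contracting interval map (PCIM) on the compact interval `X = [a,b]`: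
there are `N ≥ 1` pairwise disjoint nonempty open (relative to `X`) subintervals
whose closures cover `X`, and `f` contracts with rate `lam ∈ (0,1)` on each piece. -/
structure PCIM where
  a : ℝ
  b : ℝ
  hab : a < b
  N : ℕ
  hN : 1 ≤ N
  f : ℝ → ℝ
  lam : ℝ
  hlam₀ : 0 < lam
  hlam₁ : lam < 1
  piece : Fin N → Set ℝ
  piece_nonempty : ∀ i, (piece i).Nonempty
  piece_interval : ∀ i, ∃ c d : ℝ, piece i = Set.Ioo c d ∩ Set.Icc a b
  piece_disjoint : ∀ i j, i ≠ j → Disjoint (piece i) (piece j)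
  cover : Set.Icc a b = ⋃ i, closure (piece i)
  mapsTo : Set.MapsTo f (Set.Icc a b) (Set.Icc a b)
  contract : ∀ i, ∀ x ∈ piece i, ∀ y ∈ piece i, |f x - f y| ≤ lam * |x - y|

namespace PCIM

variable (P : PCIM)

/-- The underlying compact interval `X`. -/
def X : Set ℝ := Set.Icc P.a P.b

/-- `X* = ⋃ i, X_i`, the union of the contraction pieces. -/
def Xstar : Set ℝ := ⋃ i, P.piece i

/-- `Δ = X \ X*`, the set of boundaries of the contraction pieces. -/
def Delta : Set ℝ := P.X \ P.Xstar

/-- `X̃ = ⋂_{j ≥ 0} f⁻ʲ(X*)`, the points all of whose iterates are well defined. -/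
def Xtilde : Set ℝ := ⋂ j : ℕ, (P.f^[j]) ⁻¹' P.Xstar

/-- `D`: the set of one-sided limits of `f` at the points of `Δ`. -/
def D : Set ℝ :=
  {L | ∃ c ∈ P.Delta,
    ((𝓝[P.X ∩ Set.Iio c] c).NeBot ∧ Filter.Tendsto P.f (𝓝[P.X ∩ Set.Iio c] c) (𝓝 L)) ∨
    ((𝓝[P.X ∩ Set.Ioi c] c).NeBot ∧ Filter.Tendsto P.f (𝓝[P.X ∩ Set.Ioi c] c) (𝓝 L))}

/-- A set `A` is `f`-pseudo-invariant if for every `x ∈ A` at least one of the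
one-sided limits of `f` at `x` belongs to `A`. -/
def PseudoInvariant (A : Set ℝ) : Prop :=
  ∀ x ∈ A,
    (∃ L ∈ A, (𝓝[P.X ∩ Set.Iio x] x).NeBot ∧
      Filter.Tendsto P.f (𝓝[P.X ∩ Set.Iio x] x) (𝓝 L)) ∨
    (∃ L ∈ A, (𝓝[P.X ∩ Set.Ioi x] x).NeBot ∧
      Filter.Tendsto P.f (𝓝[P.X ∩ Set.Ioi x] x) (𝓝 L))

/-- `f` is piecewise monotonic: strictly monotone on each contraction piece. -/
def PiecewiseMonotonic : Prop :=
  ∀ i, StrictMonoOn P.f (P.piece i) ∨ StrictAntiOn P.f (P.piece i)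

/-- `f` satisfies the separation property: it is piecewise monotonic and the closures
of the images of distinct pieces are disjoint. -/
def SeparationProperty : Prop :=
  P.PiecewiseMonotonic ∧
    ∀ i j, i ≠ j → closure (P.f '' P.piece i) ∩ closure (P.f '' P.piece j) = ∅

/-- The iterates `Λ_n` defining the attractor: `Λ_0 = X`,
`Λ_{n+1} = cl (f (Λ_n \ Δ))`. -/
def LambdaIter : (P : PCIM) → ℕ → Set ℝ
  | Q, 0 => Q.X
  | Q, n + 1 => closure (Q.f '' (LambdaIter Q n \ Q.Delta))

/-- The attractor `Λ = ⋂_{n ≥ 1} Λ_n`. -/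
def Lambda : Set ℝ := ⋂ n : ℕ, P.LambdaIter (n + 1)

/-- The atom associated to the word `w = [i₁, …, iₙ]`:
`A_{i₁…iₙ} = F_{iₙ} ∘ ⋯ ∘ F_{i₁}(X)` where `F_i(A) = cl (f (A ∩ X_i))`. -/
def atomOf (w : List (Fin P.N)) : Set ℝ :=
  w.foldl (fun A i => closure (P.f '' (A ∩ P.piece i))) P.X

/-- `𝒜_n`: the set of (nonempty) atoms of generation `n`. -/
def atoms (n : ℕ) : Set (Set ℝ) :=
  {A | ∃ w : List (Fin P.N), w.length = n ∧ P.atomOf w = A ∧ A.Nonempty}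

/-- `θ` is the itinerary of `x`: `f^t(x) ∈ X_{θ_t}` for all `t`. -/
def IsItinerary (x : ℝ) (θ : ℕ → Fin P.N) : Prop :=
  ∀ t : ℕ, P.f^[t] x ∈ P.piece (θ t)

/-- The word `θ_t θ_{t+1} … θ_{t+n-1}` of length `n` of the sequence `θ`. -/
def word (θ : ℕ → Fin P.N) (t n : ℕ) : List (Fin P.N) :=
  (List.range n).map fun k => θ (t + k)

/-- `L_n(θ)`: the set of words of length `n` occurring in `θ`. -/
def lang (θ : ℕ → Fin P.N) (n : ℕ) : Set (List (Fin P.N)) :=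
  {w | ∃ t : ℕ, w = P.word θ t n}

/-- The complexity function `p_θ(n) = #L_n(θ)`. -/
noncomputable def complexity (θ : ℕ → Fin P.N) (n : ℕ) : ℕ := (P.lang θ n).ncard

/-- The forward orbit of `x` under `f`. -/
def orbit (x : ℝ) : Set ℝ := {y | ∃ k : ℕ, P.f^[k] x = y}

/-- The ω-limit set of `x` under `f`. -/
def omegaLimitSet (x : ℝ) : Set ℝ :=
  ⋂ n : ℕ, closure {y | ∃ m : ℕ, n ≤ m ∧ P.f^[m] x = y}

/-- A compact pseudo-invariant set `A` is `X̃`-minimal if the orbit of every point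
of `A ∩ X̃` is dense in `A`. -/
def XtildeMinimal (A : Set ℝ) : Prop :=
  IsCompact A ∧ P.PseudoInvariant A ∧ ∀ x ∈ A ∩ P.Xtilde, A ⊆ closure (P.orbit x)

/-- A periodic orbit contained in `X̃`. -/
def IsPeriodicOrbit (A : Set ℝ) : Prop :=
  ∃ x ∈ P.Xtilde, ∃ p : ℕ, 1 ≤ p ∧ P.f^[p] x = x ∧ A = P.orbit x

end PCIM

/-- A Cantor set: nonempty, compact, perfect and totally disconnected. -/
def IsCantorSet (A : Set ℝ) : Prop :=
  A.Nonempty ∧ IsCompact A ∧ Perfect A ∧ IsTotallyDisconnected A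


/-- `r_n(ε, Λ ∩ X̃)`: the smallest cardinality of an `(n,ε)`-spanning set for
`Λ ∩ X̃` with respect to `f`. -/
noncomputable def PCIM.spanningCard (P : PCIM) (n : ℕ) (ε : ℝ) : ℕ :=
  sInf {k : ℕ | ∃ E : Finset ℝ, E.card = k ∧ ↑E ⊆ P.Lambda ∩ P.Xtilde ∧
    ∀ x ∈ P.Lambda ∩ P.Xtilde, ∃ y ∈ E,
      ∀ j < n, |P.f^[j] x - P.f^[j] y| < ε}

/-!
Two points with the same itinerary of length `n` stay at most their initial distance apart
for `n` steps, so `r_n(ε)` is bounded by the number of itineraries of length `n` times the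
size of an `ε`-net of `X`. Under the separation property, the images `fⁿ(C_w)` of distinct
`n`-cylinders have disjoint open convex hulls, by induction on `n` (monotonicity on each
piece in one case, separation in the other). The cylinder `C_w` splits into at most
`1 + #(Δ ∩ hull fⁿ(C_w))` cylinders of length `n + 1`, so the number of itineraries grows by
at most `#Δ` per step. Thus `r_n(ε)` grows linearly in `n` and the entropy vanishes.
-/

def openHull (A : Set ℝ) : Set ℝ := {z | (∃ a ∈ A, a < z) ∧ ∃ b ∈ A, z < b}

theorem openHull_mono {A B : Set ℝ} (h : A ⊆ B) : openHull A ⊆ openHull B :=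
  fun _ ⟨⟨a, ha, haz⟩, b, hb, hzb⟩ => ⟨⟨a, h ha, haz⟩, b, h hb, hzb⟩

theorem openHull_subset_of_ordConnected {A C : Set ℝ} (hAC : A ⊆ C) (hC : C.OrdConnected) :
    openHull A ⊆ C :=
  fun _ ⟨⟨_, ha, haz⟩, _, hb, hzb⟩ => hC.out (hAC ha) (hAC hb) ⟨haz.le, hzb.le⟩

theorem not_disjoint_openHull_iff {A B : Set ℝ} :
    ¬Disjoint (openHull A) (openHull B) ↔ ∃ a₁ ∈ A, ∃ a₂ ∈ A, ∃ b₁ ∈ B, ∃ b₂ ∈ B,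
      a₁ < a₂ ∧ a₁ < b₂ ∧ b₁ < a₂ ∧ b₁ < b₂ := by
  rw [Set.not_disjoint_iff]
  constructor
  · rintro ⟨z, ⟨⟨a₁, ha₁, h₁⟩, a₂, ha₂, h₂⟩, ⟨b₁, hb₁, h₃⟩, b₂, hb₂, h₄⟩
    exact ⟨a₁, ha₁, a₂, ha₂, b₁, hb₁, b₂, hb₂, h₁.trans h₂, h₁.trans h₄, h₃.trans h₂, h₃.trans h₄⟩
  · rintro ⟨a₁, ha₁, a₂, ha₂, b₁, hb₁, b₂, hb₂, h₁, h₂, h₃, h₄⟩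
    obtain ⟨z, hz₁, hz₂⟩ := exists_between (max_lt (lt_min h₁ h₂) (lt_min h₃ h₄))
    simp only [max_lt_iff, lt_min_iff] at hz₁ hz₂
    exact ⟨z, ⟨⟨a₁, ha₁, hz₁.1⟩, a₂, ha₂, hz₂.1⟩, ⟨b₁, hb₁, hz₁.2⟩, b₂, hb₂, hz₂.2⟩

theorem disjoint_openHull_image {g : ℝ → ℝ} {s A B : Set ℝ}
    (hg : StrictMonoOn g s ∨ StrictAntiOn g s) (h : Disjoint (openHull A) (openHull B)) :
    Disjoint (openHull (g '' (A ∩ s))) (openHull (g '' (B ∩ s))) := by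
  contrapose h
  rw [not_disjoint_openHull_iff] at h ⊢
  obtain ⟨_, ⟨a₁, ha₁, rfl⟩, _, ⟨a₂, ha₂, rfl⟩, _, ⟨b₁, hb₁, rfl⟩, _, ⟨b₂, hb₂, rfl⟩,
    h₁, h₂, h₃, h₄⟩ := h
  rcases hg with hg | hg
  · exact ⟨a₁, ha₁.1, a₂, ha₂.1, b₁, hb₁.1, b₂, hb₂.1, (hg.lt_iff_lt ha₁.2 ha₂.2).1 h₁,
      (hg.lt_iff_lt ha₁.2 hb₂.2).1 h₂, (hg.lt_iff_lt hb₁.2 ha₂.2).1 h₃,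
      (hg.lt_iff_lt hb₁.2 hb₂.2).1 h₄⟩
  · exact ⟨a₂, ha₂.1, a₁, ha₁.1, b₂, hb₂.1, b₁, hb₁.1, (hg.lt_iff_gt ha₁.2 ha₂.2).1 h₁,
      (hg.lt_iff_gt hb₁.2 ha₂.2).1 h₃, (hg.lt_iff_gt ha₁.2 hb₂.2).1 h₂,
      (hg.lt_iff_gt hb₁.2 hb₂.2).1 h₄⟩

open scoped Classical in
theorem card_le_one_add_card_filter_openHull {T D : Finset ℝ}
    (hT : ∀ u ∈ T, ∀ v ∈ T, u < v → ∃ δ ∈ D, u < δ ∧ δ < v) :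
    T.card ≤ 1 + (D.filter (· ∈ openHull T)).card := by
  rcases T.eq_empty_or_nonempty with rfl | hne
  · simp
  set M := T.max' hne
  have hM : ∀ u ∈ T.erase M, u ∈ T ∧ u < M := fun u hu =>
    ⟨Finset.mem_of_mem_erase hu, (T.le_max' u (Finset.mem_of_mem_erase hu)).lt_of_ne
      (Finset.ne_of_mem_erase hu)⟩
  -- the first point of `D` to the right of `u` is strictly increasing in `u`
  set next : ℝ → ℝ := fun u => sInf {δ | δ ∈ D ∧ u < δ}
  have next_spec : ∀ u ∈ T, ∀ v ∈ T, u < v → next u ∈ D ∧ u < next u ∧ next u < v := by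
    intro u hu v hv huv
    obtain ⟨δ, hδ, huδ, hδv⟩ := hT u hu v hv huv
    have hfin : {δ | δ ∈ D ∧ u < δ}.Finite := D.finite_toSet.subset fun _ h => h.1
    obtain ⟨hD, hu⟩ : next u ∈ {δ | δ ∈ D ∧ u < δ} :=
      Set.Nonempty.csInf_mem ⟨δ, hδ, huδ⟩ hfin
    exact ⟨hD, hu, (csInf_le hfin.bddBelow ⟨hδ, huδ⟩).trans_lt hδv⟩
  have hmaps : Set.MapsTo next (T.erase M) (D.filter (· ∈ openHull T)) := by
    intro u hu
    obtain ⟨huT, huM⟩ := hM u hu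
    obtain ⟨hD, h₁, h₂⟩ := next_spec u huT M (T.max'_mem hne) huM
    exact Finset.mem_filter.2 ⟨hD, ⟨u, huT, h₁⟩, M, T.max'_mem hne, h₂⟩
  have hmono : StrictMonoOn next (T.erase M) := by
    intro u hu v hv huv
    obtain ⟨hvT, hvM⟩ := hM v hv
    exact ((next_spec u (hM u hu).1 v hvT huv).2.2).trans
      (next_spec v hvT M (T.max'_mem hne) hvM).2.1
  have := Finset.card_le_card_of_injOn next hmaps hmono.injOn
  rw [Finset.card_erase_of_mem (T.max'_mem hne)] at this
  omega

theorem TotallyBounded.exists_uniform_net {α : Type*} [PseudoMetricSpace α] {t : Set α}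
    (ht : TotallyBounded t) {ε : ℝ} (hε : 0 < ε) :
    ∃ K : ℕ, ∀ s ⊆ t, ∃ E : Finset α, ↑E ⊆ s ∧ E.card ≤ K ∧
      ∀ x ∈ s, ∃ y ∈ E, dist x y < ε := by
  classical
  obtain ⟨F, -, hF, hcover⟩ := finite_approx_of_totallyBounded ht (ε / 2) (half_pos hε)
  refine ⟨hF.toFinset.card, fun s hst => ?_⟩
  set F' := hF.toFinset.filter fun p => (ball p (ε / 2) ∩ s).Nonempty
  choose! g hg using fun p (hp : p ∈ F') => (Finset.mem_filter.1 hp).2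
  refine ⟨F'.image g, ?_, Finset.card_image_le.trans (Finset.card_filter_le _ _), ?_⟩
  · intro y hy
    obtain ⟨p, hp, rfl⟩ := Finset.mem_image.1 hy
    exact (hg p hp).2
  · intro x hx
    obtain ⟨p, hpF, hxp⟩ := Set.mem_iUnion₂.1 (hcover (hst hx))
    have hp : p ∈ F' := Finset.mem_filter.2 ⟨hF.mem_toFinset.2 hpF, x, hxp, hx⟩
    refine ⟨g p, Finset.mem_image_of_mem g hp, ?_⟩
    calc dist x (g p) ≤ dist x p + dist (g p) p := dist_triangle_right _ _ _
      _ < ε / 2 + ε / 2 := add_lt_add hxp (hg p hp).1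
      _ = ε := add_halves ε

theorem limsup_log_div_eq_zero_of_le_mul {r : ℕ → ℕ} {C : ℕ} (hr : ∀ n, r n ≤ C * (n + 1)) :
    limsup (fun n : ℕ => Real.log (r n) / n) atTop = 0 := by
  have hlog : Tendsto (fun n : ℕ => Real.log (n + 1) / n) atTop (𝓝 0) := by
    have := (Real.tendsto_pow_log_div_mul_add_atTop 1 (-1) 1 one_ne_zero).comp
      (tendsto_atTop_add_const_right _ 1 tendsto_natCast_atTop_atTop)
    refine this.congr fun n => ?_
    simp
  have hupper : Tendsto (fun n : ℕ => Real.log (C + 1) / n + Real.log (n + 1) / n) atTop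
      (𝓝 0) := by
    simpa using (tendsto_const_div_atTop_nhds_zero_nat _).add hlog
  refine (tendsto_of_tendsto_of_tendsto_of_le_of_le tendsto_const_nhds hupper
    (fun n => by positivity) fun n => ?_).limsup_eq
  rw [← add_div, ← Real.log_mul (by positivity) (by positivity)]
  refine div_le_div_of_nonneg_right ?_ n.cast_nonneg
  rcases (r n).eq_zero_or_pos with h | h
  · rw [h, Nat.cast_zero, Real.log_zero]
    exact Real.log_nonneg (one_le_mul_of_one_le_of_one_le (by simp) (by simp))
  · refine Real.log_le_log (Nat.cast_pos.2 h) ?_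
    calc (r n : ℝ) ≤ C * (n + 1) := by exact_mod_cast hr n
      _ ≤ (C + 1) * (n + 1) := by gcongr; exact le_add_of_nonneg_right zero_le_one

namespace PCIM

variable (P : PCIM)

theorem piece_subset_X (i : Fin P.N) : P.piece i ⊆ P.X := by
  obtain ⟨c, d, hcd⟩ := P.piece_interval i
  exact hcd ▸ Set.inter_subset_right

theorem Xstar_subset_X : P.Xstar ⊆ P.X := Set.iUnion_subset P.piece_subset_X

theorem Xtilde_subset_X : P.Xtilde ⊆ P.X := fun _ hx => P.Xstar_subset_X (Set.mem_iInter.1 hx 0)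

theorem finite_Delta : P.Delta.Finite := by
  choose c d hcd using P.piece_interval
  refine (Set.finite_iUnion fun i => Set.toFinite {c i, d i}).subset ?_
  rintro x ⟨hxX, hx⟩
  obtain ⟨i, hi⟩ := Set.mem_iUnion.1 (P.cover ▸ hxX : x ∈ ⋃ i, closure (P.piece i))
  have hcl : x ∈ Icc (c i) (d i) :=
    closure_minimal ((hcd i).symm ▸ Set.inter_subset_left.trans Ioo_subset_Icc_self) isClosed_Icc hi
  have hnot : x ∉ Ioo (c i) (d i) := fun h => hx (Set.mem_iUnion.2 ⟨i, hcd i ▸ ⟨h, hxX⟩⟩)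
  refine Set.mem_iUnion.2 ⟨i, ?_⟩
  rcases hcl.1.eq_or_lt with h | h
  · exact Or.inl h.symm
  · exact Or.inr (hcl.2.eq_of_not_lt fun h' => hnot ⟨h, h'⟩)

noncomputable def deltaFinset : Finset ℝ := P.finite_Delta.toFinset

/-- Pieces are relatively open in `X`, so they disconnect any interval of `X*`. -/
theorem Icc_subset_piece {i : Fin P.N} {x y : ℝ} (hx : x ∈ P.piece i)
    (hxy : Icc x y ⊆ P.Xstar) : Icc x y ⊆ P.piece i := by
  choose c d hcd using P.piece_interval
  have hmem : ∀ k, ∀ z ∈ Icc x y, z ∈ P.piece k ↔ z ∈ Ioo (c k) (d k) := fun k z hz => by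
    rw [hcd k]; exact ⟨fun h => h.1, fun h => ⟨h, P.Xstar_subset_X (hxy hz)⟩⟩
  have hcover : Icc x y ⊆ Ioo (c i) (d i) ∪ ⋃ k ≠ i, Ioo (c k) (d k) := by
    intro z hz
    obtain ⟨k, hk⟩ := Set.mem_iUnion.1 (hxy hz)
    by_cases hki : k = i
    · exact Or.inl ((hmem i z hz).1 (hki ▸ hk))
    · exact Or.inr (Set.mem_biUnion hki ((hmem k z hz).1 hk))
  have hdisj : Icc x y ∩ (Ioo (c i) (d i) ∩ ⋃ k ≠ i, Ioo (c k) (d k)) = ∅ := by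
    refine Set.eq_empty_of_forall_notMem fun z ⟨hz, hzi, hzk⟩ => ?_
    obtain ⟨k, hki, hzk⟩ := Set.mem_iUnion₂.1 hzk
    exact Set.disjoint_left.1 (P.piece_disjoint i k (Ne.symm hki)) ((hmem i z hz).2 hzi)
      ((hmem k z hz).2 hzk)
  rcases isPreconnected_iff_subset_of_disjoint.1 isPreconnected_Icc _ _ isOpen_Ioo
    (isOpen_biUnion fun _ _ => isOpen_Ioo) hcover hdisj with h | h
  · exact fun z hz => (hmem i z hz).2 (h hz)
  · intro z hz
    have hxI : x ∈ Icc x y := ⟨le_rfl, hz.1.trans hz.2⟩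
    obtain ⟨k, hki, hxk⟩ := Set.mem_iUnion₂.1 (h hxI)
    exact absurd ((hmem k x hxI).2 hxk)
      (Set.disjoint_left.1 (P.piece_disjoint i k (Ne.symm hki)) hx)

theorem exists_mem_Delta_between {i j : Fin P.N} (hij : i ≠ j) {x y : ℝ}
    (hx : x ∈ P.piece i) (hy : y ∈ P.piece j) (hxy : x < y) :
    ∃ δ ∈ P.Delta, x < δ ∧ δ < y := by
  by_contra! hgap
  have hXstar : Icc x y ⊆ P.Xstar := by
    intro z hz
    by_contra hz'
    have hzX : z ∈ P.X :=
      ⟨(P.piece_subset_X i hx).1.trans hz.1, hz.2.trans (P.piece_subset_X j hy).2⟩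
    have hxz : x < z := hz.1.lt_of_ne fun h => hz' (h ▸ Set.mem_iUnion.2 ⟨i, hx⟩)
    have hzy : z < y := hz.2.lt_of_ne fun h => hz' (h ▸ Set.mem_iUnion.2 ⟨j, hy⟩)
    exact (hgap z ⟨hzX, hz'⟩ hxz).not_gt hzy
  exact Set.disjoint_left.1 (P.piece_disjoint i j hij)
    (P.Icc_subset_piece hx hXstar (right_mem_Icc.2 hxy.le)) hy

open scoped Classical in
theorem card_pieces_meeting_le (A : Set ℝ) :
    (Finset.univ.filter fun i => (A ∩ P.piece i).Nonempty).card ≤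
      1 + (P.deltaFinset.filter (· ∈ openHull A)).card := by
  set I := Finset.univ.filter fun i => (A ∩ P.piece i).Nonempty
  choose! t ht using fun i (hi : i ∈ I) => (Finset.mem_filter.1 hi).2
  have hinj : Set.InjOn t I := fun i hi j hj hij => by_contra fun hne =>
    Set.disjoint_left.1 (P.piece_disjoint i j hne) (ht i hi).2 (hij ▸ (ht j hj).2)
  have hgap : ∀ u ∈ I.image t, ∀ v ∈ I.image t, u < v → ∃ δ ∈ P.deltaFinset, u < δ ∧ δ < v := by
    simp only [Finset.mem_image]
    rintro _ ⟨i, hi, rfl⟩ _ ⟨j, hj, rfl⟩ hij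
    have hne : i ≠ j := by rintro rfl; exact hij.false
    simpa [deltaFinset] using P.exists_mem_Delta_between hne (ht i hi).2 (ht j hj).2 hij
  have hhull : openHull (I.image t : Set ℝ) ⊆ openHull A := openHull_mono fun z hz => by
    obtain ⟨i, hi, rfl⟩ := Finset.mem_image.1 hz
    exact (ht i hi).1
  calc I.card = (I.image t).card := (Finset.card_image_of_injOn hinj).symm
    _ ≤ 1 + (P.deltaFinset.filter (· ∈ openHull (I.image t : Set ℝ))).card :=
      card_le_one_add_card_filter_openHull hgap
    _ ≤ 1 + (P.deltaFinset.filter (· ∈ openHull A)).card := by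
      gcongr 1 + Finset.card ?_
      exact Finset.monotone_filter_right _ fun _ _ hz => hhull hz

theorem ordConnected_closure_image_piece (i : Fin P.N) :
    (closure (P.f '' P.piece i)).OrdConnected := by
  have hcont : ContinuousOn P.f (P.piece i) :=
    (LipschitzOnWith.of_dist_le_mul (K := P.lam.toNNReal) fun x hx y hy => by
      rw [Real.dist_eq, Real.dist_eq, Real.coe_toNNReal _ P.hlam₀.le]
      exact P.contract i x hx y hy).continuousOn
  obtain ⟨c, d, hcd⟩ := P.piece_interval i
  have hconn : IsPreconnected (P.piece i) :=
    hcd ▸ (Set.ordConnected_Ioo.inter Set.ordConnected_Icc).isPreconnected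
  exact ((hconn.image _ hcont).closure).ordConnected

def cylinder (n : ℕ) (w : Fin n → Fin P.N) : Set ℝ :=
  {x | ∀ j : Fin n, P.f^[j] x ∈ P.piece (w j)}

open scoped Classical in
noncomputable def words (n : ℕ) : Finset (Fin n → Fin P.N) :=
  Finset.univ.filter fun w => (P.cylinder n w).Nonempty

variable {P}

theorem mem_cylinder_snoc {n : ℕ} {v : Fin n → Fin P.N} {i : Fin P.N} {x : ℝ} :
    x ∈ P.cylinder (n + 1) (Fin.snoc v i) ↔ x ∈ P.cylinder n v ∧ P.f^[n] x ∈ P.piece i := by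
  simp [cylinder, Fin.forall_fin_succ']

theorem image_cylinder_snoc (n : ℕ) (v : Fin n → Fin P.N) (i : Fin P.N) :
    P.f^[n + 1] '' P.cylinder (n + 1) (Fin.snoc v i) =
      P.f '' (P.f^[n] '' P.cylinder n v ∩ P.piece i) := by
  ext z
  simp only [Set.mem_image, Set.mem_inter_iff, mem_cylinder_snoc,
    Function.iterate_succ_apply']
  constructor
  · rintro ⟨x, ⟨hx, hxi⟩, rfl⟩
    exact ⟨_, ⟨⟨x, hx, rfl⟩, hxi⟩, rfl⟩
  · rintro ⟨_, ⟨⟨x, hx, rfl⟩, hxi⟩, rfl⟩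
    exact ⟨x, ⟨hx, hxi⟩, rfl⟩

theorem disjoint_openHull_image_cylinder (hsep : P.SeparationProperty) :
    ∀ {n : ℕ} {w w' : Fin n → Fin P.N}, w ≠ w' →
      Disjoint (openHull (P.f^[n] '' P.cylinder n w)) (openHull (P.f^[n] '' P.cylinder n w'))
  | 0, w, w', hww' => absurd (Subsingleton.elim w w') hww'
  | n + 1, w, w', hww' => by
    rw [← Fin.snoc_init_self w, ← Fin.snoc_init_self w', image_cylinder_snoc,
      image_cylinder_snoc]
    by_cases hlast : w (Fin.last n) = w' (Fin.last n)
    · have hinit : Fin.init w ≠ Fin.init w' := fun h =>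
        hww' (by rw [← Fin.snoc_init_self w, ← Fin.snoc_init_self w', h, hlast])
      rw [hlast]
      exact disjoint_openHull_image (hsep.1 _) (disjoint_openHull_image_cylinder hsep hinit)
    · have hsub : ∀ (A : Set ℝ) i, openHull (P.f '' (A ∩ P.piece i)) ⊆ closure (P.f '' P.piece i) :=
        fun A i => openHull_subset_of_ordConnected
          ((Set.image_mono Set.inter_subset_right).trans subset_closure)
          (P.ordConnected_closure_image_piece i)
      exact Set.disjoint_of_subset (hsub _ _) (hsub _ _)
        (Set.disjoint_iff_inter_eq_empty.2 (hsep.2 _ _ hlast))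

open scoped Classical in
theorem card_words_succ_le (hsep : P.SeparationProperty) (n : ℕ) :
    (P.words (n + 1)).card ≤ (P.words n).card + P.deltaFinset.card := by
  set image : (Fin n → Fin P.N) → Set ℝ := fun v => P.f^[n] '' P.cylinder n v
  set pieces : (Fin n → Fin P.N) → Finset (Fin P.N) := fun v =>
    Finset.univ.filter fun i => (image v ∩ P.piece i).Nonempty
  set gaps : (Fin n → Fin P.N) → Finset ℝ := fun v =>
    P.deltaFinset.filter (· ∈ openHull (image v))
  have hwords : P.words (n + 1) ⊆ (P.words n).biUnion fun v => (pieces v).image (Fin.snoc v) := by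
    intro w hw
    obtain ⟨x, hx⟩ := (Finset.mem_filter.1 hw).2
    rw [← Fin.snoc_init_self w, mem_cylinder_snoc] at hx
    refine Finset.mem_biUnion.2 ⟨Fin.init w, Finset.mem_filter.2 ⟨Finset.mem_univ _, x, hx.1⟩,
      Finset.mem_image.2 ⟨w (Fin.last n), ?_, Fin.snoc_init_self w⟩⟩
    exact Finset.mem_filter.2 ⟨Finset.mem_univ _, _, ⟨x, hx.1, rfl⟩, hx.2⟩
  have hgaps : ∑ v ∈ P.words n, (gaps v).card ≤ P.deltaFinset.card := by
    rw [← Finset.card_biUnion fun v _ v' _ hvv' => Finset.disjoint_filter_filter' _ _ ?_]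
    · exact Finset.card_le_card (Finset.biUnion_subset.2 fun v _ => Finset.filter_subset _ _)
    · intro p hp hp' z hz
      exact Set.disjoint_iff.1 (disjoint_openHull_image_cylinder hsep hvv') ⟨hp z hz, hp' z hz⟩
  calc (P.words (n + 1)).card ≤ ∑ v ∈ P.words n, (pieces v).card :=
        (Finset.card_le_card hwords).trans
          (Finset.card_biUnion_le.trans (Finset.sum_le_sum fun v _ => Finset.card_image_le))
    _ ≤ ∑ v ∈ P.words n, (1 + (gaps v).card) :=
        Finset.sum_le_sum fun v _ => P.card_pieces_meeting_le (image v)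
    _ = (P.words n).card + ∑ v ∈ P.words n, (gaps v).card := by
        rw [Finset.sum_add_distrib, Finset.card_eq_sum_ones]
    _ ≤ (P.words n).card + P.deltaFinset.card := by gcongr

theorem card_words_le (hsep : P.SeparationProperty) (n : ℕ) :
    (P.words n).card ≤ 1 + n * P.deltaFinset.card := by
  induction n with
  | zero => exact (Finset.card_le_univ _).trans (by simp)
  | succ n ih => linarith [card_words_succ_le hsep n]

theorem abs_iterate_sub_le {n : ℕ} {w : Fin n → Fin P.N} {x y : ℝ}
    (hx : x ∈ P.cylinder n w) (hy : y ∈ P.cylinder n w) :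
    ∀ j ≤ n, |P.f^[j] x - P.f^[j] y| ≤ |x - y|
  | 0, _ => le_rfl
  | j + 1, hj => by
    rw [Function.iterate_succ_apply', Function.iterate_succ_apply']
    calc |P.f (P.f^[j] x) - P.f (P.f^[j] y)| ≤ P.lam * |P.f^[j] x - P.f^[j] y| :=
          P.contract _ _ (hx ⟨j, hj⟩) _ (hy ⟨j, hj⟩)
      _ ≤ |P.f^[j] x - P.f^[j] y| := mul_le_of_le_one_left (abs_nonneg _) P.hlam₁.le
      _ ≤ |x - y| := abs_iterate_sub_le hx hy j (by omega)

theorem exists_mem_cylinder {x : ℝ} (hx : x ∈ P.Xtilde) (n : ℕ) :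
    ∃ w : Fin n → Fin P.N, x ∈ P.cylinder n w := by
  choose w hw using fun j : Fin n => Set.mem_iUnion.1 (Set.mem_iInter.1 hx j)
  exact ⟨w, hw⟩

theorem exists_spanningCard_le {ε : ℝ} (hε : 0 < ε) :
    ∃ K : ℕ, ∀ n, P.spanningCard n ε ≤ (P.words n).card * K := by
  classical
  obtain ⟨K, hK⟩ := (isCompact_Icc (a := P.a) (b := P.b)).totallyBounded.exists_uniform_net hε
  refine ⟨K, fun n => ?_⟩
  choose E hES hEcard hEnet using fun w : Fin n → Fin P.N =>
    hK (P.cylinder n w ∩ (P.Lambda ∩ P.Xtilde)) fun x hx => P.Xtilde_subset_X hx.2.2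
  have hspan : ∀ x ∈ P.Lambda ∩ P.Xtilde, ∃ y ∈ (P.words n).biUnion E,
      ∀ j < n, |P.f^[j] x - P.f^[j] y| < ε := by
    intro x hx
    obtain ⟨w, hw⟩ := exists_mem_cylinder hx.2 n
    obtain ⟨y, hyE, hxy⟩ := hEnet w x ⟨hw, hx⟩
    refine ⟨y, Finset.mem_biUnion.2 ⟨w, Finset.mem_filter.2 ⟨Finset.mem_univ _, x, hw⟩, hyE⟩,
      fun j hj => ?_⟩
    exact (abs_iterate_sub_le hw (hES w hyE).1 j hj.le).trans_lt (Real.dist_eq x y ▸ hxy)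
  calc P.spanningCard n ε ≤ ((P.words n).biUnion E).card :=
        Nat.sInf_le ⟨_, rfl, fun y hy => ?_, hspan⟩
    _ ≤ (P.words n).card * K := Finset.card_biUnion_le_card_mul _ _ _ fun w _ => hEcard w
  obtain ⟨w, -, hyE⟩ := Finset.mem_biUnion.1 hy
  exact (hES w hyE).2

end PCIM

theorem topEntropy_attractor_eq_zero_general (P : PCIM)
    (hsep : P.SeparationProperty) :
    Filter.Tendsto
      (fun ε : ℝ => Filter.limsup
        (fun n : ℕ => Real.log (P.spanningCard n ε) / (n : ℝ)) Filter.atTop)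
      (𝓝[>] (0 : ℝ)) (𝓝 0) := by
  refine tendsto_const_nhds.congr' (eventually_nhdsWithin_of_forall fun ε (hε : 0 < ε) => ?_)
  obtain ⟨K, hK⟩ := P.exists_spanningCard_le hε
  refine (limsup_log_div_eq_zero_of_le_mul (C := (1 + P.deltaFinset.card) * K) fun n => ?_).symm
  calc P.spanningCard n ε ≤ (P.words n).card * K := hK n
    _ ≤ (1 + n * P.deltaFinset.card) * K := by gcongr; exact P.card_words_le hsep n
    _ ≤ (1 + P.deltaFinset.card) * K * (n + 1) := by nlinarith

/-- Under the separation property and `D ⊆ X̃`, the topological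
entropy of `f` on `Λ ∩ X̃` (Bowen's formula) is zero:
`lim_{ε→0⁺} limsup_{n→∞} log r_n(ε, Λ ∩ X̃) / n = 0`. -/
theorem topEntropy_attractor_eq_zero (P : PCIM)
    (hsep : P.SeparationProperty) (hD : P.D ⊆ P.Xtilde) :
    Filter.Tendsto
      (fun ε : ℝ => Filter.limsup
        (fun n : ℕ => Real.log (P.spanningCard n ε) / (n : ℝ)) Filter.atTop)
      (𝓝[>] (0 : ℝ)) (𝓝 0) :=
  topEntropy_attractor_eq_zero_general P hsep
end

section
/- Let f be a piecewise contracting interval map on X satisfying the separation property. Then for every n ≥ 1, the collection of atoms of generation n is pairwise disjoint: if A, B ∈ 𝒜_n and A ∩ B ≠ ∅, then A = B. -/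
open Set Filter Metric Topology

/-! Two atoms `A_{w i}` and `A_{v j}` that meet lie in `cl f(X_i)` and `cl f(X_j)`, so `i = j` by
separation. Atoms are closed intervals, and if two subintervals of `X_i` have disjoint closures,
points `m₁ < m₂` of `X_i` separating them are sent by the strictly monotone `f` to points
separating the closures of their images. Hence `A_w` and `A_v` meet, and `A_w = A_v` by induction
on the length of the words. -/

section OrderSeparation

theorem Set.OrdConnected.forall_lt_of_disjoint {α : Type*} [LinearOrder α] {S T : Set α}
    (hS : S.OrdConnected) (hT : T.OrdConnected) (hST : Disjoint S T) {x y : α} (hx : x ∈ S)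
    (hy : y ∈ T) (hxy : x < y) : ∀ s ∈ S, ∀ t ∈ T, s < t := by
  intro s hs t ht
  by_contra! hts
  rcases le_or_gt y s with hys | hsy
  · exact hST.ne_of_mem (hS.out hx hs ⟨hxy.le, hys⟩) hy rfl
  · exact hST.ne_of_mem hs (hT.out ht hy ⟨hts, hsy.le⟩) rfl

theorem disjoint_closure_image_of_strictMonoOn {α β : Type*} [Preorder α] [LinearOrder β]
    [TopologicalSpace β] [OrderClosedTopology β] {f : α → β} {I S T : Set α}
    (hf : StrictMonoOn f I) (hSI : S ⊆ I) (hTI : T ⊆ I) {m₁ m₂ : α} (hm₁ : m₁ ∈ I)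
    (hm₂ : m₂ ∈ I) (hm : m₁ < m₂) (hSm : S ⊆ Iio m₁) (hTm : T ⊆ Ioi m₂) :
    Disjoint (closure (f '' S)) (closure (f '' T)) := by
  have hS : closure (f '' S) ⊆ Iic (f m₁) :=
    closure_minimal (image_subset_iff.2 fun x hx => (hf (hSI hx) hm₁ (hSm hx)).le) isClosed_Iic
  have hT : closure (f '' T) ⊆ Ici (f m₂) :=
    closure_minimal (image_subset_iff.2 fun y hy => (hf hm₂ (hTI hy) (hTm hy)).le) isClosed_Ici
  exact (Iic_disjoint_Ici.2 (hf hm₁ hm₂ hm).not_ge).mono hS hT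

variable {α : Type*} [ConditionallyCompleteLinearOrder α] [TopologicalSpace α] [OrderTopology α]

theorem Set.OrdConnected.exists_lt_lt_of_disjoint_closure [DenselyOrdered α] {S T : Set α}
    (hS : S.OrdConnected) (hT : T.OrdConnected) (hST : Disjoint (closure S) (closure T))
    {x y : α} (hx : x ∈ S) (hy : y ∈ T) (hxy : x < y) :
    ∃ m₁ m₂, m₁ < m₂ ∧ S ⊆ Iio m₁ ∧ T ⊆ Ioi m₂ := by
  have hlt := hS.forall_lt_of_disjoint hT (hST.mono subset_closure subset_closure) hx hy hxy
  have hSbdd : BddAbove S := ⟨y, fun s hs => (hlt s hs y hy).le⟩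
  have hTbdd : BddBelow T := ⟨x, fun t ht => (hlt x hx t ht).le⟩
  have hle : sSup S ≤ sInf T :=
    csSup_le ⟨x, hx⟩ fun s hs => le_csInf ⟨y, hy⟩ fun t ht => (hlt s hs t ht).le
  have hne : sSup S ≠ sInf T :=
    hST.ne_of_mem (csSup_mem_closure ⟨x, hx⟩ hSbdd) (csInf_mem_closure ⟨y, hy⟩ hTbdd)
  obtain ⟨m₂, hSm₂, hm₂T⟩ := exists_between (hle.lt_of_ne hne)
  obtain ⟨m₁, hSm₁, hm₁₂⟩ := exists_between hSm₂
  exact ⟨m₁, m₂, hm₁₂, fun s hs => (le_csSup hSbdd hs).trans_lt hSm₁,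
    fun t ht => hm₂T.trans_le (csInf_le hTbdd ht)⟩

theorem disjoint_closure_image_of_disjoint_closure [DenselyOrdered α] {β : Type*}
    [LinearOrder β] [TopologicalSpace β] [OrderClosedTopology β] {f : α → β} {I S T : Set α}
    (hf : StrictMonoOn f I ∨ StrictAntiOn f I) (hI : I.OrdConnected) (hSI : S ⊆ I) (hTI : T ⊆ I)
    (hS : S.OrdConnected) (hT : T.OrdConnected) (hST : Disjoint (closure S) (closure T)) :
    Disjoint (closure (f '' S)) (closure (f '' T)) := by
  rcases S.eq_empty_or_nonempty with rfl | ⟨x, hx⟩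
  · simp
  rcases T.eq_empty_or_nonempty with rfl | ⟨y, hy⟩
  · simp
  wlog hxy : x < y generalizing S T x y
  · have hyx := (not_lt.1 hxy).lt_of_ne (hST.ne_of_mem (subset_closure hx) (subset_closure hy)).symm
    exact (this hTI hSI hT hS hST.symm y hy x hx hyx).symm
  obtain ⟨m₁, m₂, hm, hSm, hTm⟩ := hS.exists_lt_lt_of_disjoint_closure hT hST hx hy hxy
  have hm₁ : m₁ ∈ I := hI.out (hSI hx) (hTI hy) ⟨(hSm hx).le, hm.le.trans (hTm hy).le⟩
  have hm₂ : m₂ ∈ I := hI.out (hSI hx) (hTI hy) ⟨((hSm hx).trans hm).le, (hTm hy).le⟩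
  rcases hf with hf | hf
  · exact disjoint_closure_image_of_strictMonoOn hf hSI hTI hm₁ hm₂ hm hSm hTm
  · exact disjoint_closure_image_of_strictMonoOn (β := βᵒᵈ) hf.dual_right hSI hTI hm₁ hm₂ hm
      hSm hTm

end OrderSeparation

namespace PCIM

variable (P : PCIM)

theorem ordConnected_piece (i : Fin P.N) : (P.piece i).OrdConnected := by
  obtain ⟨c, d, h⟩ := P.piece_interval i
  rw [h]
  exact ordConnected_Ioo.inter ordConnected_Icc

theorem continuousOn_piece (i : Fin P.N) : ContinuousOn P.f (P.piece i) := by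
  refine (LipschitzOnWith.of_dist_le_mul fun x hx y hy => ?_).continuousOn (K := P.lam.toNNReal)
  rw [Real.dist_eq, Real.dist_eq, Real.coe_toNNReal _ P.hlam₀.le]
  exact P.contract i x hx y hy

theorem atomOf_append_singleton (w : List (Fin P.N)) (i : Fin P.N) :
    P.atomOf (w ++ [i]) = closure (P.f '' (P.atomOf w ∩ P.piece i)) := by
  simp [atomOf, List.foldl_append]

theorem isClosed_atomOf (w : List (Fin P.N)) : IsClosed (P.atomOf w) := by
  induction w using List.reverseRecOn with
  | nil => exact isClosed_Icc
  | append_singleton w i _ => rw [P.atomOf_append_singleton]; exact isClosed_closure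

theorem ordConnected_atomOf (w : List (Fin P.N)) : (P.atomOf w).OrdConnected := by
  induction w using List.reverseRecOn with
  | nil => exact ordConnected_Icc
  | append_singleton w i ih =>
    rw [P.atomOf_append_singleton, ← isPreconnected_iff_ordConnected]
    refine (IsPreconnected.image ?_ P.f ((P.continuousOn_piece i).mono inter_subset_right)).closure
    exact (ih.inter (P.ordConnected_piece i)).isPreconnected

theorem eq_of_inter_atomOf_append_singleton_nonempty (hsep : P.SeparationProperty)
    {w v : List (Fin P.N)} {i j : Fin P.N}
    (h : (P.atomOf (w ++ [i]) ∩ P.atomOf (v ++ [j])).Nonempty) : i = j := by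
  by_contra hij
  rw [P.atomOf_append_singleton, P.atomOf_append_singleton] at h
  obtain ⟨x, hxi, hxj⟩ := h
  have hx : x ∈ closure (P.f '' P.piece i) ∩ closure (P.f '' P.piece j) :=
    ⟨closure_mono (image_mono inter_subset_right) hxi,
      closure_mono (image_mono inter_subset_right) hxj⟩
  rwa [hsep.2 i j hij] at hx

theorem inter_atomOf_nonempty_of_append_singleton (hsep : P.SeparationProperty)
    {w v : List (Fin P.N)} {i : Fin P.N}
    (h : (P.atomOf (w ++ [i]) ∩ P.atomOf (v ++ [i])).Nonempty) :
    (P.atomOf w ∩ P.atomOf v).Nonempty := by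
  rw [P.atomOf_append_singleton, P.atomOf_append_singleton, ← not_disjoint_iff_nonempty_inter] at h
  have hwi := (P.ordConnected_atomOf w).inter (P.ordConnected_piece i)
  have hvi := (P.ordConnected_atomOf v).inter (P.ordConnected_piece i)
  have hmeet : ¬Disjoint (closure (P.atomOf w ∩ P.piece i)) (closure (P.atomOf v ∩ P.piece i)) :=
    fun hdisj => h <| disjoint_closure_image_of_disjoint_closure (hsep.1 i)
      (P.ordConnected_piece i) inter_subset_right inter_subset_right hwi hvi hdisj
  obtain ⟨x, hxw, hxv⟩ := not_disjoint_iff.1 hmeet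
  exact ⟨x, closure_minimal inter_subset_left (P.isClosed_atomOf w) hxw,
    closure_minimal inter_subset_left (P.isClosed_atomOf v) hxv⟩

theorem atomOf_eq_of_inter_nonempty (hsep : P.SeparationProperty) {w v : List (Fin P.N)}
    (hlen : w.length = v.length) (h : (P.atomOf w ∩ P.atomOf v).Nonempty) :
    P.atomOf w = P.atomOf v := by
  induction w using List.reverseRecOn generalizing v with
  | nil => rw [List.length_eq_zero_iff.1 hlen.symm]
  | append_singleton w i ih =>
    obtain rfl | ⟨v, j, rfl⟩ := v.eq_nil_or_concat
    · simp at hlen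
    rw [List.concat_eq_append] at hlen h ⊢
    obtain rfl := P.eq_of_inter_atomOf_append_singleton_nonempty hsep h
    rw [P.atomOf_append_singleton, P.atomOf_append_singleton,
      ih (by simpa using hlen) (P.inter_atomOf_nonempty_of_append_singleton hsep h)]

end PCIM

/-- Under the separation property, atoms of the same generation
`n ≥ 1` are pairwise disjoint: if two of them intersect, they are equal. -/
theorem atoms_pairwise_disjoint (P : PCIM) (hsep : P.SeparationProperty) :
    ∀ n : ℕ, 1 ≤ n → ∀ A ∈ P.atoms n, ∀ B ∈ P.atoms n,
      (A ∩ B).Nonempty → A = B := by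
  rintro n - A ⟨w, hw, rfl, -⟩ B ⟨v, hv, rfl, -⟩ h
  exact P.atomOf_eq_of_inter_nonempty hsep (hw.trans hv.symm) h
end
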